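/- If for all x, p(x)ρ_x ≤ 2^{-h} ρ (operator inequality, ρ = Σ_x p(x)ρ_x), and x_i, x_j are two positions of a stationary expander walk with |i−j| ≤ log|X|/log(1/λ), then E_{x_i,x_j}[p(x_i)p(x_j) Tr[ρ_{x_i} ρ^{-1/2} ρ_{x_j} ρ^{-1/2}]] ≤ 2^{-h}/|X|, using that each vertex of a stationary walk is uniformly distributed and p is subnormalized. -/

import Mathlib

open scoped BigOperators ComplexOrder

/-- Apply a real function to a Hermitian matrix via its spectral decomposition
(zero if the matrix is not Hermitian). -/
noncomputable def matFun {n : Type*} [Fintype n] [DecidableEq n]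
    (A : Matrix n n ℂ) (f : ℝ → ℝ) : Matrix n n ℂ :=
  if h : A.IsHermitian then h.cfc f else 0

/-- Moore–Penrose pseudoinverse power of a Hermitian matrix: eigenvalue `0` is sent to `0`,
nonzero eigenvalues `t` to `t ^ r`. -/
noncomputable def pinvPow {n : Type*} [Fintype n] [DecidableEq n]
    (A : Matrix n n ℂ) (r : ℝ) : Matrix n n ℂ :=
  matFun A (fun t => if t = 0 then 0 else Real.rpow t r)

/-- Matrix logarithm (base 2) on the support of a Hermitian matrix. -/
noncomputable def matLog2 {n : Type*} [Fintype n] [DecidableEq n]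
    (A : Matrix n n ℂ) : Matrix n n ℂ :=
  matFun A (fun t => if t = 0 then 0 else Real.logb 2 t)

/-- Schatten 1-norm (trace norm) of a complex matrix: the trace of `√(Aᴴ A)`. -/
noncomputable def traceNorm {n : Type*} [Fintype n] [DecidableEq n]
    (A : Matrix n n ℂ) : ℝ :=
  (((Matrix.posSemidef_conjTranspose_mul_self A).1.eigenvectorUnitary.1 *
      Matrix.diagonal ((fun t : ℝ => (t : ℂ)) ∘ (Real.sqrt ·) ∘ (Matrix.posSemidef_conjTranspose_mul_self A).1.eigenvalues) *
      (star (Matrix.posSemidef_conjTranspose_mul_self A).1.eigenvectorUnitary : Matrix n n ℂ)).trace).re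

/-- Schatten 2-norm (Frobenius norm) of a complex matrix. -/
noncomputable def frobNorm {n : Type*} [Fintype n] [DecidableEq n]
    (A : Matrix n n ℂ) : ℝ :=
  Real.sqrt (((A.conjTranspose * A).trace).re)

/-- Squared Frobenius norm. -/
noncomputable def frobSq {n : Type*} [Fintype n] [DecidableEq n]
    (A : Matrix n n ℂ) : ℝ :=
  ((A.conjTranspose * A).trace).re

/-- Schatten ∞-norm (operator norm): square root of the largest eigenvalue of `Aᴴ A`. -/
noncomputable def matOpNorm {n : Type*} [Fintype n] [DecidableEq n]
    (A : Matrix n n ℂ) : ℝ :=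
  Real.sqrt (⨆ i, (Matrix.posSemidef_conjTranspose_mul_self A).1.eigenvalues i)

/-! With `σ = ρ^{-1/2}`, the matrix `σ ρ σ` is the projection onto the support of `ρ`, so
`σ ρ σ ≤ 1`. Pairing the hypothesis `p(y) ρ_y ≤ 2^{-h} ρ` with the positive matrix `σ ρ_x σ`
under the trace gives `p(y) Tr[ρ_x σ ρ_y σ] ≤ 2^{-h} Tr[ρ_x σ ρ σ] ≤ 2^{-h}` for every pair
`(x, y)`. The remaining weight `p(x_i)` is averaged against the uniform law of `x_i`, and
`∑ p ≤ 1`. -/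

section LoewnerOrder

open scoped MatrixOrder

namespace Matrix

variable {n 𝕜 : Type*} [Fintype n] [RCLike 𝕜]

lemma PosSemidef.trace_mul_nonneg {A B : Matrix n n 𝕜} (hA : A.PosSemidef)
    (hB : B.PosSemidef) : 0 ≤ (A * B).trace := by
  classical
  have hS : (CFC.sqrt A)ᴴ = CFC.sqrt A :=
    (nonneg_iff_posSemidef.mp (CFC.sqrt_nonneg A)).isHermitian
  rw [← CFC.sqrt_mul_sqrt_self A hA.nonneg, Matrix.mul_assoc, trace_mul_comm]
  simpa only [hS] using (hB.mul_mul_conjTranspose_same (CFC.sqrt A)).trace_nonneg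

lemma trace_mul_le_trace_mul_of_le {A B C : Matrix n n 𝕜} (hC : C.PosSemidef)
    (hAB : A ≤ B) : (C * A).trace ≤ (C * B).trace := by
  simpa only [Matrix.mul_sub, trace_sub, sub_nonneg] using hC.trace_mul_nonneg hAB

lemma smul_trace_mul_mul_mul_le [DecidableEq n] {ρ σ A B : Matrix n n 𝕜} {p c : ℝ}
    (hσ : σ.IsHermitian) (hσρσ : σ * ρ * σ ≤ 1) (hc : 0 ≤ c) (hA : A.PosSemidef)
    (hB : p • B ≤ c • ρ) : p • (A * σ * B * σ).trace ≤ c • A.trace := by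
  have hσAσ : (σ * A * σ).PosSemidef := by
    simpa only [hσ.eq] using hA.conjTranspose_mul_mul_same σ
  calc p • (A * σ * B * σ).trace = (σ * A * σ * (p • B)).trace := by
        rw [mul_smul_comm, trace_smul, trace_mul_comm]; simp only [Matrix.mul_assoc]
    _ ≤ (σ * A * σ * (c • ρ)).trace := trace_mul_le_trace_mul_of_le hσAσ hB
    _ = c • (A * (σ * ρ * σ)).trace := by
        rw [mul_smul_comm, trace_smul, Matrix.mul_assoc σ, Matrix.mul_assoc σ, trace_mul_comm]
        simp only [Matrix.mul_assoc]
    _ ≤ c • (A * 1).trace :=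
        smul_le_smul_of_nonneg_left (trace_mul_le_trace_mul_of_le hA hσρσ) hc
    _ = c • A.trace := by rw [Matrix.mul_one]

end Matrix

variable {n : Type*} [Fintype n] [DecidableEq n]

lemma Matrix.IsHermitian.pinvPow_eq_cfc {A : Matrix n n ℂ} (hA : A.IsHermitian) (r : ℝ) :
    pinvPow A r = cfc (fun t : ℝ => if t = 0 then 0 else t ^ r) A := by
  rw [pinvPow, matFun, dif_pos hA, hA.cfc_eq]
  rfl

lemma isHermitian_pinvPow (A : Matrix n n ℂ) (r : ℝ) : (pinvPow A r).IsHermitian := by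
  by_cases hA : A.IsHermitian
  · rw [hA.pinvPow_eq_cfc]
    exact cfc_predicate _ A
  · simp only [pinvPow, matFun, dif_neg hA, Matrix.isHermitian_zero]

lemma Matrix.PosSemidef.pinvPow_neg_half_mul_self_mul_le_one {A : Matrix n n ℂ}
    (hA : A.PosSemidef) : pinvPow A (-(1 / 2)) * A * pinvPow A (-(1 / 2)) ≤ 1 := by
  rw [hA.1.pinvPow_eq_cfc]
  nth_rewrite 2 [← cfc_id' ℝ A hA.1.isSelfAdjoint]
  have hcont (f : ℝ → ℝ) : ContinuousOn f (spectrum ℝ A) :=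
    A.finite_real_spectrum.continuousOn f
  rw [← cfc_mul _ _ A (hcont _) (hcont _), ← cfc_mul _ _ A (hcont _) (hcont _)]
  refine cfc_le_one _ A fun t ht => ?_
  have ht0 : 0 ≤ t := spectrum_nonneg_of_nonneg hA.nonneg ht
  split_ifs with h
  · simp
  · rw [mul_right_comm, ← Real.rpow_add (lt_of_le_of_ne ht0 (Ne.symm h))]
    norm_num [Real.rpow_neg_one, h]

end LoewnerOrder

lemma sum_mul_fst_eq_of_marginal {X R : Type*} [Fintype X] [Field R] {μ : X × X → R}
    (hmarg : ∀ x, ∑ y, μ (x, y) = 1 / (Fintype.card X : R)) (f : X → R) :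
    ∑ z, μ z * f z.1 = (∑ x, f x) / Fintype.card X := by
  simp only [Fintype.sum_prod_type, ← Finset.sum_mul, hmarg, Finset.sum_div]
  exact Finset.sum_congr rfl fun x _ => by ring

theorem stmt10_general {X : Type*} [Fintype X] {d : ℕ}
    (p : X → ℝ) (hp0 : ∀ x, 0 ≤ p x) (hp1 : ∑ x, p x ≤ 1)
    (ρv : X → Matrix (Fin d) (Fin d) ℂ)
    (hρv : ∀ x, (ρv x).PosSemidef ∧ (ρv x).trace = 1)
    (ρ : Matrix (Fin d) (Fin d) ℂ) (hρ : ρ = ∑ x, (p x : ℝ) • ρv x)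
    (h : ℝ) (hop : ∀ x, ((2 : ℝ) ^ (-h) • ρ - (p x : ℝ) • ρv x).PosSemidef)
    (μ : X × X → ℝ) (hμ0 : ∀ z, 0 ≤ μ z)
    (hmarg : ∀ x, ∑ y, μ (x, y) = 1 / (Fintype.card X : ℝ)) :
    ∑ z : X × X, μ z * (p z.1 * p z.2 *
        ((ρv z.1 * pinvPow ρ (-(1/2 : ℝ)) * ρv z.2 * pinvPow ρ (-(1/2 : ℝ))).trace).re)
      ≤ (2 : ℝ) ^ (-h) / (Fintype.card X : ℝ) := by
  set c := (2 : ℝ) ^ (-h)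
  set σ := pinvPow ρ (-(1/2 : ℝ))
  have hc : 0 ≤ c := by positivity
  have hρpsd : ρ.PosSemidef :=
    hρ ▸ Matrix.posSemidef_sum _ fun x _ => (hρv x).1.smul (hp0 x)
  have hpair (x y : X) : p y * ((ρv x * σ * ρv y * σ).trace).re ≤ c := by
    have := Matrix.smul_trace_mul_mul_mul_le (isHermitian_pinvPow ρ _)
      hρpsd.pinvPow_neg_half_mul_self_mul_le_one hc (hρv x).1 (hop y)
    simpa only [(hρv x).2, Complex.smul_re, Complex.one_re, smul_eq_mul, mul_one]
      using (Complex.le_def.mp this).1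
  calc ∑ z : X × X, μ z * (p z.1 * p z.2 * ((ρv z.1 * σ * ρv z.2 * σ).trace).re)
      ≤ ∑ z : X × X, μ z * (p z.1 * c) := Finset.sum_le_sum fun z _ => by
        rw [mul_assoc (p z.1)]
        exact mul_le_mul_of_nonneg_left (mul_le_mul_of_nonneg_left (hpair _ _) (hp0 _)) (hμ0 z)
    _ = (∑ x, p x) * c / Fintype.card X := by
        rw [sum_mul_fst_eq_of_marginal hmarg (fun x => p x * c), Finset.sum_mul]
    _ ≤ c / Fintype.card X := by
        gcongr
        exact mul_le_of_le_one_left hc hp1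

/-- Cross-term bound for nearby positions of a stationary expander walk: if
`p(x) ρₓ ≤ 2^{-h} ρ` for all `x`, `p` is subnormalized, and the pair `(x_i, x_j)` has uniform
first marginal, then `E[p(x_i) p(x_j) Tr[ρ_{x_i} ρ^{-1/2} ρ_{x_j} ρ^{-1/2}]] ≤ 2^{-h}/|X|`. -/
theorem stmt10 {X : Type*} [Fintype X] [Nonempty X] {d : ℕ}
    (p : X → ℝ) (hp0 : ∀ x, 0 ≤ p x) (hp1 : ∑ x, p x ≤ 1)
    (ρv : X → Matrix (Fin d) (Fin d) ℂ)
    (hρv : ∀ x, (ρv x).PosSemidef ∧ (ρv x).trace = 1)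
    (ρ : Matrix (Fin d) (Fin d) ℂ) (hρ : ρ = ∑ x, (p x : ℝ) • ρv x)
    (h : ℝ) (hop : ∀ x, ((2 : ℝ) ^ (-h) • ρ - (p x : ℝ) • ρv x).PosSemidef)
    (μ : X × X → ℝ) (hμ0 : ∀ z, 0 ≤ μ z) (hμ1 : ∑ z, μ z = 1)
    (hmarg : ∀ x, ∑ y, μ (x, y) = 1 / (Fintype.card X : ℝ)) :
    ∑ z : X × X, μ z * (p z.1 * p z.2 *
        ((ρv z.1 * pinvPow ρ (-(1/2 : ℝ)) * ρv z.2 * pinvPow ρ (-(1/2 : ℝ))).trace).re)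
      ≤ (2 : ℝ) ^ (-h) / (Fintype.card X : ℝ) :=
  stmt10_general p hp0 hp1 ρv hρv ρ hρ h hop μ hμ0 hmarg
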